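/- arXiv:1012.5152 — 2 statements merged into one kernel-verified Lean document; each statement's English description precedes it below -/
import Mathlib

section
/- The Haar family 𝓗 is an orthonormal basis of the complex Hilbert space L²(μ) = L²(Σ_A, B, μ; ℂ): its elements are pairwise orthogonal unit vectors, and its closed linear span is all of L²(μ). -/
open MeasureTheory Filter
open scoped ENNReal NNReal

namespace SFT

variable {l : ℕ}

/-- The one-sided subshift of finite type determined by the `l × l` matrix `A`:
infinite sequences with transitions allowed by `A`. -/
abbrev SigmaA (l : ℕ) (A : Matrix (Fin l) (Fin l) ℕ) : Type :=
  {ω : ℕ → Fin l // ∀ k, A (ω k) (ω (k + 1)) = 1}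

/-- The left shift `σ` on `SigmaA l A`. -/
def shift {A : Matrix (Fin l) (Fin l) ℕ} (ω : SigmaA l A) : SigmaA l A :=
  ⟨fun n => ω.1 (n + 1), fun k => ω.2 (k + 1)⟩

/-- Birkhoff sums `S_k φ = ∑_{m<k} φ ∘ σ^m`. -/
def birkhoff {A : Matrix (Fin l) (Fin l) ℕ} (φ : SigmaA l A → ℝ) (k : ℕ) (ω : SigmaA l A) : ℝ :=
  ∑ m ∈ Finset.range k, φ (shift^[m] ω)

/-- The matrix `A` has `0`-`1` entries and is irreducible and aperiodic
(some power of `A` has all entries strictly positive). -/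
def Primitive (A : Matrix (Fin l) (Fin l) ℕ) : Prop :=
  (∀ i j, A i j = 0 ∨ A i j = 1) ∧ ∃ n : ℕ, 0 < n ∧ ∀ i j, 0 < (A ^ n) i j

/-- A finite word is admissible, i.e. belongs to `Σ_A^*`. -/
def Admissible (A : Matrix (Fin l) (Fin l) ℕ) (x : List (Fin l)) : Prop :=
  x ≠ [] ∧ ∀ (i : ℕ) (h : i + 1 < x.length), A (x[i]'(by omega)) (x[i + 1]'h) = 1

/-- The cylinder set `[x]` of a finite word (the empty word gives all of `Σ_A`). -/
def cylinder (A : Matrix (Fin l) (Fin l) ℕ) (x : List (Fin l)) : Set (SigmaA l A) :=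
  {ω | ∀ (i : ℕ) (h : i < x.length), ω.1 i = x[i]'h}

/-- The initial word `(ω_1, …, ω_k)` of `ω`. -/
def wordPrefix {A : Matrix (Fin l) (Fin l) ℕ} (ω : SigmaA l A) (k : ℕ) : List (Fin l) :=
  List.ofFn (fun i : Fin k => ω.1 i)

/-- `μ` is a Gibbs measure for the potential `φ` with pressure `P`:
`c⁻¹ ≤ μ([ω_1,…,ω_k]) / exp(S_kφ(ω) − kP) ≤ c` for some `c > 1`. -/
def IsGibbs {A : Matrix (Fin l) (Fin l) ℕ} (φ : SigmaA l A → ℝ) (P : ℝ)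
    (μ : Measure (SigmaA l A)) : Prop :=
  ∃ c : ℝ, 1 < c ∧ ∀ (ω : SigmaA l A) (k : ℕ), 0 < k →
    c⁻¹ ≤ (μ (cylinder A (wordPrefix ω k))).toReal / Real.exp (birkhoff φ k ω - k * P) ∧
      (μ (cylinder A (wordPrefix ω k))).toReal / Real.exp (birkhoff φ k ω - k * P) ≤ c

/-- `φ` is Hölder continuous with respect to the metric `d(ω,υ) = 2^{-(ω ∧ υ)}`:
there are `C` and an exponent `s > 0` with `|φ(ω) − φ(υ)| ≤ C ⬝ d(ω,υ)^s`, i.e.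
`|φ(ω) − φ(υ)| ≤ C ⬝ 2^{-sn}` whenever `ω` and `υ` agree in their first `n` coordinates. -/
def HolderCont {A : Matrix (Fin l) (Fin l) ℕ} (φ : SigmaA l A → ℝ) : Prop :=
  ∃ C s : ℝ, 0 < s ∧ ∀ (ω υ : SigmaA l A) (n : ℕ),
    (∀ i < n, ω.1 i = υ.1 i) → |φ ω - φ υ| ≤ C * (2 : ℝ) ^ (-(s * n))

lemma measurableSet_cylinder (A : Matrix (Fin l) (Fin l) ℕ) (x : List (Fin l)) :
    MeasurableSet (cylinder A x) := by
  have h : cylinder A x = ⋂ i : Fin x.length,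
      (fun ω : SigmaA l A => ω.1 i.1) ⁻¹' {x[i.1]'i.2} := by
    ext ω
    simp only [cylinder, Set.mem_setOf_eq, Set.mem_iInter, Set.mem_preimage,
      Set.mem_singleton_iff]
    exact ⟨fun h i => h i.1 i.2, fun h i hi => h ⟨i, hi⟩⟩
  rw [h]
  exact MeasurableSet.iInter fun i =>
    ((measurable_pi_apply i.1).comp measurable_subtype_coe) (measurableSet_singleton _)

/-- `α(x)`: the number of children of the word `x` (the row sum of `A` at the
last letter of `x`). -/
def alpha (A : Matrix (Fin l) (Fin l) ℕ) (x : List (Fin l)) : ℕ :=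
  match x.getLast? with
  | some a => ∑ i, A a i
  | none => 0

/-- The `m`-th child `x θ_x⁻¹(m)` of the word `x`, the ordering of the children
being given by `θinv x`. -/
def child (θinv : List (Fin l) → ℕ → Fin l) (x : List (Fin l)) (m : ℕ) : List (Fin l) :=
  x ++ [θinv x m]

/-- The characteristic function of the cylinder `[x]`, as an element of `L²(μ)`. -/
noncomputable def cylLp (A : Matrix (Fin l) (Fin l) ℕ) (μ : Measure (SigmaA l A))
    [IsFiniteMeasure μ] (x : List (Fin l)) : Lp ℂ 2 μ :=
  indicatorConstLp 2 (measurableSet_cylinder A x) (measure_ne_top μ _) (1 : ℂ)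

/-- The Haar function `e_{x,j} = ∑_m μ([xθ_x⁻¹(m)])^{-1/2} ⟨f_{x,m}, U_x f_{x,j}⟩_x χ_{[xθ_x⁻¹(m)]}`
as an element of `L²(μ)`; here `u x m j = ⟨f_{x,m}, U_x f_{x,j}⟩_x` are the matrix
coefficients of `U_x` in the orthonormal basis `(f_{x,m})_m`. -/
noncomputable def haarLp (A : Matrix (Fin l) (Fin l) ℕ) (μ : Measure (SigmaA l A))
    [IsFiniteMeasure μ] (θinv : List (Fin l) → ℕ → Fin l) (u : List (Fin l) → ℕ → ℕ → ℝ)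
    (x : List (Fin l)) (j : ℕ) : Lp ℂ 2 μ :=
  ∑ m ∈ Finset.range (alpha A x),
    ((((Real.sqrt ((μ (cylinder A (child θinv x m))).toReal))⁻¹ * u x m j : ℝ) : ℂ)) •
      cylLp A μ (child θinv x m)

/-- The Haar family `𝓗`: the functions `e_{x,j}` for admissible `x` and
`1 ≤ j ≤ α(x) − 1` (here indexed by `0 ≤ j < α(x) − 1`), together with the
normalised characteristic functions `μ([a])^{-1/2} χ_{[a]}` of the length-one cylinders. -/
noncomputable def haarSet (A : Matrix (Fin l) (Fin l) ℕ) (μ : Measure (SigmaA l A))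
    [IsFiniteMeasure μ] (θinv : List (Fin l) → ℕ → Fin l) (u : List (Fin l) → ℕ → ℕ → ℝ) :
    Set (Lp ℂ 2 μ) :=
  {f | ∃ x j, Admissible A x ∧ j + 1 < alpha A x ∧ f = haarLp A μ θinv u x j} ∪
    {f | ∃ a : Fin l,
      f = (((Real.sqrt ((μ (cylinder A [a])).toReal))⁻¹ : ℝ) : ℂ) • cylLp A μ [a]}

end SFT

/-!
For an admissible word `x`, the normalised indicators `ν_m = μ([xθ⁻¹(m)])^{-1/2} 𝟙_{[xθ⁻¹(m)]}`
of its children are orthonormal, and `e_{x,j} = ∑_m u_{m,j} ν_m` where `u` is the real orthogonal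
matrix of `U_x`; so the `e_{x,j}` with fixed `x` are orthonormal. The normalisation of `U_x` says
that its last column produces `μ([x])^{-1/2} 𝟙_{[x]}`, so every other `e_{x,j}` is orthogonal to
`𝟙_{[x]}`, hence to the indicator of any cylinder that contains `[x]` or is disjoint from it. The
children of a word that is shorter than `x` and different from it are of this kind, which gives the
orthogonality of Haar functions attached to different words.

Inverting `u` writes each `ν_m` through the `e_{x,j}` and `μ([x])^{-1/2} 𝟙_{[x]}`, so by induction
on the length every cylinder indicator lies in the span of `𝓗`. Cylinders form a π-system
generating the σ-algebra, so for `f` orthogonal to all of them the vector measure `f • μ` vanishes,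
and `f = 0`.
-/

open scoped InnerProductSpace

namespace MeasureTheory

variable {α : Type*} [m : MeasurableSpace α] {μ : Measure α} [IsFiniteMeasure μ]
  {E : Type*} [NormedAddCommGroup E] {p : ℝ≥0∞}

lemma indicatorConstLp_congr_set {s t : Set α} (h : s = t) (hs : MeasurableSet s)
    (ht : MeasurableSet t) (c : E) :
    indicatorConstLp p hs (measure_ne_top μ s) c =
      indicatorConstLp p ht (measure_ne_top μ t) c := by
  subst h
  rfl

lemma indicatorConstLp_biUnion_finset {ι : Type*} {I : Finset ι} {t : ι → Set α}
    (ht : ∀ i, MeasurableSet (t i)) (hd : (I : Set ι).PairwiseDisjoint t) (c : E) :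
    indicatorConstLp p (I.measurableSet_biUnion fun i _ => ht i) (measure_ne_top μ _) c =
      ∑ i ∈ I, indicatorConstLp p (ht i) (measure_ne_top μ _) c := by
  classical
  induction I using Finset.induction_on with
  | empty =>
    rw [Finset.sum_empty, indicatorConstLp_congr_set (t := ∅) (by simp) _ MeasurableSet.empty]
    exact indicatorConstLp_empty
  | insert a I ha ih =>
    rw [Finset.sum_insert ha, ← ih (hd.subset (by simp)),
      indicatorConstLp_congr_set (Finset.set_biUnion_insert a I t) _
        ((ht a).union (I.measurableSet_biUnion fun i _ => ht i))]
    exact indicatorConstLp_disjoint_union _ _ _ _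
      (Set.disjoint_iUnion₂_right.mpr fun i hi =>
        hd (by simp) (by simp [hi]) (by rintro rfl; exact ha hi)) c

theorem Lp.topologicalClosure_eq_top_of_isPiSystem {𝕜 : Type*} [RCLike 𝕜] {C : Set (Set α)}
    (hgen : m = MeasurableSpace.generateFrom C) (hC : IsPiSystem C) (huniv : Set.univ ∈ C)
    {K : Submodule 𝕜 (Lp 𝕜 2 μ)}
    (hK : ∀ s ∈ C, ∀ hs : MeasurableSet s,
      indicatorConstLp 2 hs (measure_ne_top μ s) (1 : 𝕜) ∈ K) :
    K.topologicalClosure = ⊤ := by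
  rw [Submodule.topologicalClosure_eq_top_iff, Submodule.eq_bot_iff]
  intro f hf
  have hint : Integrable f μ := (Lp.memLp f).integrable one_le_two
  -- `f ⊥ 𝟙_s` says that the vector measure `f • μ` vanishes on `s`.
  have hzero : ∀ s ∈ C, μ.withDensityᵥ f s = (0 : VectorMeasure α 𝕜) s := fun s hs => by
    have hs' : MeasurableSet s := hgen ▸ MeasurableSpace.measurableSet_generateFrom hs
    rw [withDensityᵥ_apply hint hs', zero_apply,
      ← L2.inner_indicatorConstLp_one hs' (measure_ne_top μ s)]
    exact (Submodule.mem_orthogonal K f).mp hf _ (hK s hs hs')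
  have hν : μ.withDensityᵥ f = μ.withDensityᵥ 0 := by
    rw [withDensityᵥ_zero]
    exact VectorMeasure.ext_of_generateFrom C hzero hgen hC (hzero _ huniv)
  exact Lp.eq_zero_iff_ae_eq_zero.mpr (hint.ae_eq_of_withDensityᵥ_eq (integrable_zero _ _ _) hν)

end MeasureTheory

section OrthonormalColumns

def HasOrthonormalColumns (n : ℕ) (v : ℕ → ℕ → ℝ) : Prop :=
  ∀ j < n, ∀ j' < n, ∑ m ∈ Finset.range n, v m j * v m j' = if j = j' then 1 else 0

variable {n : ℕ} {v : ℕ → ℕ → ℝ}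

lemma HasOrthonormalColumns.transpose (hv : HasOrthonormalColumns n v) :
    HasOrthonormalColumns n (fun j m => v m j) := by
  let M : Matrix (Fin n) (Fin n) ℝ := Matrix.of fun a b => v a b
  have hM : M.transpose * M = 1 := by
    ext j j'
    simp only [M, Matrix.mul_apply, Matrix.transpose_apply, Matrix.of_apply, Matrix.one_apply,
      Fin.ext_iff]
    rw [Fin.sum_univ_eq_sum_range (fun m => v m j * v m j') n, hv j j.2 j' j'.2]
  intro m hm m' hm'
  have hM' : M * M.transpose = 1 := mul_eq_one_comm.mp hM
  have h := congrFun (congrFun hM' ⟨m, hm⟩) ⟨m', hm'⟩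
  simp only [M, Matrix.mul_apply, Matrix.transpose_apply, Matrix.of_apply, Matrix.one_apply,
    Fin.ext_iff] at h
  rwa [Fin.sum_univ_eq_sum_range (fun j => v m j * v m' j) n] at h

lemma HasOrthonormalColumns.sum_smul_sum_smul {M : Type*} [AddCommGroup M] [Module ℝ M]
    (hv : HasOrthonormalColumns n v) (w : ℕ → M) {m : ℕ} (hm : m < n) :
    ∑ j ∈ Finset.range n, v m j • ∑ m' ∈ Finset.range n, v m' j • w m' = w m := by
  simp_rw [Finset.smul_sum, smul_smul]
  rw [Finset.sum_comm]
  simp_rw [← Finset.sum_smul]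
  rw [Finset.sum_eq_single m]
  · rw [hv.transpose m hm m hm, if_pos rfl, one_smul]
  · intro m' hm' hne
    rw [hv.transpose m hm m' (Finset.mem_range.mp hm'), if_neg hne.symm, zero_smul]
  · exact fun h => absurd (Finset.mem_range.mpr hm) h

end OrthonormalColumns

namespace SFT

variable {l : ℕ}

section Cylinders

variable {A : Matrix (Fin l) (Fin l) ℕ}

lemma cylinder_nil : cylinder A [] = Set.univ := by
  ext ω
  simp [cylinder]

lemma cylinder_anti {x y : List (Fin l)} (h : x <+: y) : cylinder A y ⊆ cylinder A x :=
  fun ω hω i hi => by rw [h.getElem hi]; exact hω i (lt_of_lt_of_le hi h.length_le)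

lemma mem_cylinder_append {x : List (Fin l)} {b : Fin l} {ω : SigmaA l A} :
    ω ∈ cylinder A (x ++ [b]) ↔ ω ∈ cylinder A x ∧ ω.1 x.length = b := by
  simp only [cylinder, Set.mem_ofPred_eq, List.length_append, List.length_singleton]
  constructor
  · intro h
    refine ⟨fun i hi => ?_, ?_⟩
    · simpa [List.getElem_append_left hi] using h i (by omega)
    · simpa using h x.length (by omega)
  · rintro ⟨h, hb⟩ i hi
    rcases Nat.lt_succ_iff_lt_or_eq.mp hi with hi | rfl
    · simpa [List.getElem_append_left hi] using h i hi
    · simpa using hb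

lemma prefix_or_disjoint_cylinder {x y : List (Fin l)} (hlen : x.length ≤ y.length) :
    x <+: y ∨ Disjoint (cylinder A x) (cylinder A y) := by
  by_cases h : ∀ (i : ℕ) (hi : i < x.length), x[i] = y[i]'(lt_of_lt_of_le hi hlen)
  · left
    rw [List.prefix_iff_eq_take]
    exact List.ext_getElem (by simp [hlen]) fun i hx _ => by rw [List.getElem_take, h i hx]
  · right
    simp only [not_forall] at h
    obtain ⟨i, hi, hne⟩ := h
    exact Set.disjoint_left.mpr fun ω hx hy => hne ((hx i hi).symm.trans (hy i _))

lemma subset_or_disjoint_cylinder {x y : List (Fin l)} (hlen : x.length ≤ y.length) :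
    cylinder A y ⊆ cylinder A x ∨ Disjoint (cylinder A x) (cylinder A y) :=
  (prefix_or_disjoint_cylinder hlen).imp_left cylinder_anti

lemma isPiSystem_range_cylinder : IsPiSystem (Set.range (cylinder A)) := by
  have key : ∀ x y : List (Fin l), x.length ≤ y.length →
      (cylinder A x ∩ cylinder A y).Nonempty → cylinder A x ∩ cylinder A y = cylinder A y :=
    fun x y hlen hne => (prefix_or_disjoint_cylinder hlen).elim
      (fun hpre => Set.inter_eq_right.mpr (cylinder_anti hpre))
      (fun hdisj => absurd hdisj.inter_eq (Set.nonempty_iff_ne_empty.mp hne))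
  rintro _ ⟨x, rfl⟩ _ ⟨y, rfl⟩ hne
  rcases le_total x.length y.length with hlen | hlen
  · exact ⟨y, (key x y hlen hne).symm⟩
  · rw [Set.inter_comm] at hne ⊢
    exact ⟨x, (key y x hlen hne).symm⟩

lemma setOf_apply_eq_eq_iUnion_cylinder (i : ℕ) (b : Fin l) :
    {ω : SigmaA l A | ω.1 i = b} = ⋃ v : Fin i → Fin l, cylinder A (List.ofFn v ++ [b]) := by
  ext ω
  simp only [Set.mem_ofPred_eq, Set.mem_iUnion, mem_cylinder_append, List.length_ofFn]
  refine ⟨fun h => ⟨fun k => ω.1 k, fun k hk => by simp, h⟩, fun ⟨_, _, h⟩ => h⟩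

lemma measurableSpace_eq_generateFrom_cylinder :
    (inferInstance : MeasurableSpace (SigmaA l A)) =
      MeasurableSpace.generateFrom (Set.range (cylinder A)) := by
  refine le_antisymm ?_ (MeasurableSpace.generateFrom_le ?_)
  · let _ : MeasurableSpace (SigmaA l A) := MeasurableSpace.generateFrom (Set.range (cylinder A))
    have hval : Measurable (Subtype.val : SigmaA l A → ℕ → Fin l) :=
      measurable_pi_iff.mpr fun i => measurable_to_countable' fun b => by
        rw [show (fun ω : SigmaA l A => ω.1 i) ⁻¹' {b} = {ω | ω.1 i = b} from rfl,
          setOf_apply_eq_eq_iUnion_cylinder]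
        exact MeasurableSet.iUnion fun v => MeasurableSpace.measurableSet_generateFrom ⟨_, rfl⟩
    exact measurable_iff_comap_le.mp hval
  · rintro _ ⟨x, rfl⟩
    exact measurableSet_cylinder A x

lemma cylinder_eq_empty_of_not_admissible {x : List (Fin l)} (hne : x ≠ [])
    (hx : ¬ Admissible A x) : cylinder A x = ∅ :=
  Set.eq_empty_of_forall_notMem fun ω hω => hx ⟨hne, fun i hi => by
    simpa only [hω i (by omega), hω (i + 1) hi] using ω.2 i⟩

lemma admissible_singleton (a : Fin l) : Admissible A [a] :=
  ⟨by simp, fun i hi => by simp at hi⟩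

lemma Admissible.append {x : List (Fin l)} (hx : Admissible A x) {b : Fin l}
    (hb : A (x.getLast hx.1) b = 1) : Admissible A (x ++ [b]) := by
  refine ⟨by simp, fun i hi => ?_⟩
  simp only [List.length_append, List.length_singleton] at hi
  rcases Nat.lt_succ_iff_lt_or_eq.mp hi with hi | hi
  · simpa [List.getElem_append_left hi, List.getElem_append_left (Nat.lt_of_succ_lt hi)]
      using hx.2 i hi
  · have hi' : i = x.length - 1 := by omega
    subst hi'
    simpa [List.getElem_append_left (by omega : x.length - 1 < x.length),
      List.getLast_eq_getElem, Nat.sub_add_cancel (List.length_pos_iff.mpr hx.1)] using hb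

lemma Admissible.of_append {y : List (Fin l)} {b : Fin l} (h : Admissible A (y ++ [b]))
    (hy : y ≠ []) : Admissible A y ∧ A (y.getLast hy) b = 1 := by
  refine ⟨⟨hy, fun i hi => ?_⟩, ?_⟩
  · have h2 := h.2 i (by simp; omega)
    rwa [List.getElem_append_left (Nat.lt_of_succ_lt hi), List.getElem_append_left hi] at h2
  · have hlen := List.length_pos_iff.mpr hy
    simpa [List.getElem_append_left (by omega : y.length - 1 < y.length),
      List.getLast_eq_getElem, Nat.sub_add_cancel hlen] using h.2 (y.length - 1) (by simp; omega)

end Cylinders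

section Positivity

variable {A : Matrix (Fin l) (Fin l) ℕ}

lemma Primitive.exists_transition (hA : Primitive A) (a : Fin l) : ∃ b, A a b = 1 := by
  obtain ⟨h01, n, hn, hpos⟩ := hA
  by_contra! h
  obtain ⟨k, rfl⟩ : ∃ k, n = k + 1 := ⟨n - 1, by omega⟩
  have hrow : ∀ b, A a b = 0 := fun b => (h01 a b).resolve_right (h b)
  have := hpos a a
  simp [pow_succ', Matrix.mul_apply, hrow] at this

lemma exists_mem_cylinder (hA : ∀ a, ∃ b, A a b = 1) {x : List (Fin l)}
    (hx : Admissible A x) : (cylinder A x).Nonempty := by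
  choose next hnext using hA
  set a := x.getLast hx.1
  have hlen := List.length_pos_iff.mpr hx.1
  let ω : ℕ → Fin l := fun i => if h : i < x.length then x[i] else next^[i + 1 - x.length] a
  refine ⟨⟨ω, fun k => ?_⟩, fun i hi => by simp [ω, hi]⟩
  by_cases h1 : k + 1 < x.length
  · simpa [ω, h1, Nat.lt_of_succ_lt h1] using hx.2 k h1
  by_cases h2 : k + 1 = x.length
  · have hk : x[k] = a := by simp [a, List.getLast_eq_getElem, ← h2]
    simpa [ω, h2, hk, show k + 1 + 1 - x.length = 1 by omega] using hnext a
  · simpa [ω, show ¬ k < x.length by omega, h1, show k + 1 + 1 - x.length = k + 1 - x.length + 1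
      by omega, Function.iterate_succ_apply'] using hnext _

lemma wordPrefix_eq_of_mem_cylinder {x : List (Fin l)} {ω : SigmaA l A}
    (hω : ω ∈ cylinder A x) : wordPrefix ω x.length = x :=
  List.ext_getElem (by simp [wordPrefix]) fun n _ h => by simpa [wordPrefix] using hω n h

lemma IsGibbs.measure_cylinder_pos {φ : SigmaA l A → ℝ} {P : ℝ} {μ : Measure (SigmaA l A)}
    (hG : IsGibbs φ P μ) (hA : ∀ a, ∃ b, A a b = 1) {x : List (Fin l)} (hx : Admissible A x) :
    0 < (μ (cylinder A x)).toReal := by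
  obtain ⟨ω, hω⟩ := exists_mem_cylinder hA hx
  obtain ⟨c, hc, hG⟩ := hG
  have h := (hG ω x.length (List.length_pos_iff.mpr hx.1)).1
  rw [wordPrefix_eq_of_mem_cylinder hω] at h
  exact (div_pos_iff_of_pos_right (Real.exp_pos _)).mp (lt_of_lt_of_le (by positivity) h)

end Positivity

section Children

variable {A : Matrix (Fin l) (Fin l) ℕ} {θinv : List (Fin l) → ℕ → Fin l}
  {x : List (Fin l)}

lemma cylinder_child_subset (m : ℕ) : cylinder A (child θinv x m) ⊆ cylinder A x :=
  cylinder_anti (List.prefix_append _ _)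

lemma Admissible.child (hx : Admissible A x)
    (hθ : Set.MapsTo (θinv x) (Set.Iio (alpha A x)) {y | A (x.getLast hx.1) y = 1}) {m : ℕ}
    (hm : m < alpha A x) : Admissible A (child θinv x m) :=
  hx.append (hθ hm)

lemma disjoint_cylinder_child (hθ : Set.InjOn (θinv x) (Set.Iio (alpha A x))) {m m' : ℕ}
    (hm : m < alpha A x) (hm' : m' < alpha A x) (hne : m ≠ m') :
    Disjoint (cylinder A (child θinv x m)) (cylinder A (child θinv x m')) :=
  Set.disjoint_left.mpr fun _ h h' =>
    hne (hθ hm hm' ((mem_cylinder_append.mp h).2.symm.trans (mem_cylinder_append.mp h').2))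

lemma cylinder_eq_biUnion_child (hx : x ≠ [])
    (hθ : Set.SurjOn (θinv x) (Set.Iio (alpha A x)) {y | A (x.getLast hx) y = 1}) :
    cylinder A x = ⋃ m ∈ Finset.range (alpha A x), cylinder A (child θinv x m) := by
  refine subset_antisymm (fun ω hω => ?_)
    (Set.iUnion₂_subset fun m _ => cylinder_child_subset m)
  have hlast : A (x.getLast hx) (ω.1 x.length) = 1 := by
    have hlen := List.length_pos_iff.mpr hx
    simpa [hω (x.length - 1) (by omega), List.getLast_eq_getElem, Nat.sub_add_cancel hlen]
      using ω.2 (x.length - 1)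
  obtain ⟨m, hm, hmω⟩ := hθ hlast
  exact Set.mem_biUnion (Finset.mem_range.mpr hm) (mem_cylinder_append.mpr ⟨hω, hmω.symm⟩)

lemma cylinder_nil_eq_iUnion : cylinder A [] = ⋃ a ∈ Finset.univ, cylinder A [a] := by
  refine subset_antisymm (fun ω _ => ?_) (Set.subset_univ _ |>.trans_eq cylinder_nil.symm)
  refine Set.mem_biUnion (Finset.mem_univ (ω.1 0)) fun i hi => ?_
  simp only [List.length_singleton, Nat.lt_one_iff] at hi
  simp [hi]

lemma disjoint_cylinder_singleton {a b : Fin l} (hab : a ≠ b) :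
    Disjoint (cylinder A [a]) (cylinder A [b]) :=
  Set.disjoint_left.mpr fun ω ha hb =>
    hab (by simpa using (ha 0 (by simp)).symm.trans (hb 0 (by simp)))

end Children

section CylinderFunctions

variable {A : Matrix (Fin l) (Fin l) ℕ} {μ : Measure (SigmaA l A)} [IsFiniteMeasure μ]

-- The level-one members `μ([a])^{-1/2} χ_{[a]}` of `haarSet` are `normCylLp A μ [a]`
-- by definition.
noncomputable def normCylLp (A : Matrix (Fin l) (Fin l) ℕ) (μ : Measure (SigmaA l A))
    [IsFiniteMeasure μ] (x : List (Fin l)) : Lp ℂ 2 μ :=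
  (((Real.sqrt ((μ (cylinder A x)).toReal))⁻¹ : ℝ) : ℂ) • cylLp A μ x

lemma cylLp_eq_smul_normCylLp {x : List (Fin l)} (hx : 0 < (μ (cylinder A x)).toReal) :
    cylLp A μ x = ((Real.sqrt ((μ (cylinder A x)).toReal) : ℝ) : ℂ) • normCylLp A μ x := by
  rw [normCylLp, smul_smul, ← Complex.ofReal_mul, mul_inv_cancel₀ (Real.sqrt_pos.mpr hx).ne',
    Complex.ofReal_one, one_smul]

lemma inner_cylLp_cylLp (x y : List (Fin l)) :
    ⟪cylLp A μ x, cylLp A μ y⟫_ℂ = ((μ (cylinder A x ∩ cylinder A y)).toReal : ℂ) := by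
  simp [cylLp, L2.inner_indicatorConstLp_indicatorConstLp, Measure.real]

lemma inner_cylLp_normCylLp_of_subset {x y : List (Fin l)} (h : cylinder A y ⊆ cylinder A x) :
    ⟪cylLp A μ x, normCylLp A μ y⟫_ℂ = Real.sqrt (μ (cylinder A y)).toReal := by
  rw [normCylLp, inner_smul_right, inner_cylLp_cylLp, Set.inter_eq_right.mpr h,
    ← Complex.ofReal_mul, inv_mul_eq_div, Real.div_sqrt]

lemma inner_cylLp_normCylLp_of_disjoint {x y : List (Fin l)}
    (h : Disjoint (cylinder A x) (cylinder A y)) :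
    ⟪cylLp A μ x, normCylLp A μ y⟫_ℂ = 0 := by
  rw [normCylLp, inner_smul_right, inner_cylLp_cylLp, h.inter_eq]
  simp

lemma inner_normCylLp_self {x : List (Fin l)} (hx : 0 < (μ (cylinder A x)).toReal) :
    ⟪normCylLp A μ x, normCylLp A μ x⟫_ℂ = 1 := by
  nth_rewrite 1 [normCylLp]
  rw [inner_smul_left, inner_cylLp_normCylLp_of_subset le_rfl, Complex.conj_ofReal,
    ← Complex.ofReal_mul, inv_mul_cancel₀ (Real.sqrt_pos.mpr hx).ne', Complex.ofReal_one]

lemma inner_normCylLp_of_disjoint {x y : List (Fin l)}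
    (h : Disjoint (cylinder A x) (cylinder A y)) :
    ⟪normCylLp A μ x, normCylLp A μ y⟫_ℂ = 0 := by
  nth_rewrite 1 [normCylLp]
  rw [inner_smul_left, inner_cylLp_normCylLp_of_disjoint h, mul_zero]

variable {θinv : List (Fin l) → ℕ → Fin l}

lemma cylLp_eq_sum_child {x : List (Fin l)} (hx : x ≠ [])
    (hθ : Set.BijOn (θinv x) (Set.Iio (alpha A x)) {y | A (x.getLast hx) y = 1}) :
    cylLp A μ x = ∑ m ∈ Finset.range (alpha A x), cylLp A μ (child θinv x m) := by
  rw [cylLp, indicatorConstLp_congr_set (cylinder_eq_biUnion_child hx hθ.surjOn) _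
    (Finset.measurableSet_biUnion _ fun m _ => measurableSet_cylinder A _)]
  exact indicatorConstLp_biUnion_finset (fun m => measurableSet_cylinder A _)
    (fun m hm m' hm' hne => disjoint_cylinder_child hθ.injOn (by simpa using hm)
      (by simpa using hm') hne) 1

lemma cylLp_nil_eq_sum : cylLp A μ [] = ∑ a, cylLp A μ [a] := by
  rw [cylLp, indicatorConstLp_congr_set cylinder_nil_eq_iUnion _
    (Finset.measurableSet_biUnion _ fun a _ => measurableSet_cylinder A _)]
  exact indicatorConstLp_biUnion_finset (fun a => measurableSet_cylinder A [a])
    (fun a _ b _ hab => disjoint_cylinder_singleton hab) 1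

lemma cylLp_eq_zero_of_not_admissible {x : List (Fin l)} (hne : x ≠ []) (hx : ¬ Admissible A x) :
    cylLp A μ x = 0 := by
  rw [cylLp, indicatorConstLp_congr_set (cylinder_eq_empty_of_not_admissible hne hx) _
    MeasurableSet.empty]
  exact indicatorConstLp_empty

end CylinderFunctions

section HaarFamily

variable {A : Matrix (Fin l) (Fin l) ℕ} {μ : Measure (SigmaA l A)} [IsFiniteMeasure μ]
  {θinv : List (Fin l) → ℕ → Fin l} {u : List (Fin l) → ℕ → ℕ → ℝ}

lemma haarLp_eq_sum_normCylLp (x : List (Fin l)) (j : ℕ) :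
    haarLp A μ θinv u x j = ∑ m ∈ Finset.range (alpha A x),
      ((u x m j : ℝ) : ℂ) • normCylLp A μ (child θinv x m) :=
  Finset.sum_congr rfl fun m _ => by rw [normCylLp, smul_smul, ← Complex.ofReal_mul, mul_comm]

lemma orthonormal_normCylLp_child {x : List (Fin l)}
    (hpos : ∀ m < alpha A x, 0 < (μ (cylinder A (child θinv x m))).toReal)
    (hθ : Set.InjOn (θinv x) (Set.Iio (alpha A x))) :
    Orthonormal ℂ fun m : Fin (alpha A x) => normCylLp A μ (child θinv x m) := by
  classical
  rw [orthonormal_iff_ite]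
  intro m m'
  split_ifs with h
  · subst h
    exact inner_normCylLp_self (hpos m m.2)
  · exact inner_normCylLp_of_disjoint (disjoint_cylinder_child hθ m.2 m'.2 (Fin.val_ne_of_ne h))

lemma inner_haarLp_haarLp_same {x : List (Fin l)}
    (hpos : ∀ m < alpha A x, 0 < (μ (cylinder A (child θinv x m))).toReal)
    (hθ : Set.InjOn (θinv x) (Set.Iio (alpha A x))) (hu : HasOrthonormalColumns (alpha A x) (u x))
    {j j' : ℕ} (hj : j < alpha A x) (hj' : j' < alpha A x) :
    ⟪haarLp A μ θinv u x j, haarLp A μ θinv u x j'⟫_ℂ = if j = j' then 1 else 0 := by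
  have hsum (k : ℕ) : haarLp A μ θinv u x k =
      ∑ m : Fin (alpha A x), ((u x m k : ℝ) : ℂ) • normCylLp A μ (child θinv x m) := by
    rw [haarLp_eq_sum_normCylLp, Fin.sum_univ_eq_sum_range
      (fun m => ((u x m k : ℝ) : ℂ) • normCylLp A μ (child θinv x m))]
  rw [hsum, hsum, (orthonormal_normCylLp_child hpos hθ).inner_sum]
  simp only [Complex.conj_ofReal, ← Complex.ofReal_mul]
  rw [← Complex.ofReal_sum, Fin.sum_univ_eq_sum_range (fun m => u x m j * u x m j'),
    hu j hj j' hj']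
  split_ifs <;> simp

lemma haarLp_last {x : List (Fin l)} (hx : x ≠ [])
    (hθ : Set.BijOn (θinv x) (Set.Iio (alpha A x)) {y | A (x.getLast hx) y = 1})
    (hpos : ∀ m < alpha A x, 0 < (μ (cylinder A (child θinv x m))).toReal)
    (hlast : ∀ m < alpha A x, u x m (alpha A x - 1) =
      (Real.sqrt ((μ (cylinder A x)).toReal))⁻¹ *
        Real.sqrt ((μ (cylinder A (child θinv x m))).toReal)) :
    haarLp A μ θinv u x (alpha A x - 1) = normCylLp A μ x := by
  rw [haarLp, normCylLp, cylLp_eq_sum_child hx hθ, Finset.smul_sum]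
  refine Finset.sum_congr rfl fun m hm => ?_
  rw [hlast m (Finset.mem_range.mp hm), mul_left_comm,
    inv_mul_cancel₀ (Real.sqrt_pos.mpr (hpos m (Finset.mem_range.mp hm))).ne', mul_one]

lemma inner_cylLp_haarLp_self_eq_zero {x : List (Fin l)} (hx : Admissible A x)
    (hθ : Set.BijOn (θinv x) (Set.Iio (alpha A x)) {y | A (x.getLast hx.1) y = 1})
    (hx0 : 0 < (μ (cylinder A x)).toReal)
    (hpos : ∀ m < alpha A x, 0 < (μ (cylinder A (child θinv x m))).toReal)
    (hu : HasOrthonormalColumns (alpha A x) (u x))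
    (hlast : ∀ m < alpha A x, u x m (alpha A x - 1) =
      (Real.sqrt ((μ (cylinder A x)).toReal))⁻¹ *
        Real.sqrt ((μ (cylinder A (child θinv x m))).toReal))
    {j : ℕ} (hj : j + 1 < alpha A x) :
    ⟪cylLp A μ x, haarLp A μ θinv u x j⟫_ℂ = 0 := by
  rw [cylLp_eq_smul_normCylLp hx0, inner_smul_left, ← haarLp_last hx.1 hθ hpos hlast,
    inner_haarLp_haarLp_same hpos hθ.injOn hu (by omega) (by omega), if_neg (by omega), mul_zero]

lemma inner_cylLp_haarLp_eq_zero {y : List (Fin l)} {j : ℕ}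
    (hy : ⟪cylLp A μ y, haarLp A μ θinv u y j⟫_ℂ = 0) {z : List (Fin l)}
    (hz : cylinder A y ⊆ cylinder A z ∨ Disjoint (cylinder A z) (cylinder A y)) :
    ⟪cylLp A μ z, haarLp A μ θinv u y j⟫_ℂ = 0 := by
  rcases hz with hsub | hdisj
  · rw [← hy]
    simp only [haarLp_eq_sum_normCylLp, inner_sum, inner_smul_right]
    refine Finset.sum_congr rfl fun m _ => ?_
    rw [inner_cylLp_normCylLp_of_subset ((cylinder_child_subset m).trans hsub),
      inner_cylLp_normCylLp_of_subset (cylinder_child_subset m)]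
  · simp only [haarLp_eq_sum_normCylLp, inner_sum, inner_smul_right]
    exact Finset.sum_eq_zero fun m _ => by
      rw [inner_cylLp_normCylLp_of_disjoint (hdisj.mono_right (cylinder_child_subset m)),
        mul_zero]

lemma inner_normCylLp_haarLp_eq_zero {y : List (Fin l)} {j : ℕ}
    (hy : ⟪cylLp A μ y, haarLp A μ θinv u y j⟫_ℂ = 0) {z : List (Fin l)}
    (hz : cylinder A y ⊆ cylinder A z ∨ Disjoint (cylinder A z) (cylinder A y)) :
    ⟪normCylLp A μ z, haarLp A μ θinv u y j⟫_ℂ = 0 := by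
  rw [normCylLp, inner_smul_left, inner_cylLp_haarLp_eq_zero hy hz, mul_zero]

lemma inner_haarLp_haarLp_eq_zero_of_length_le {y : List (Fin l)} {j' : ℕ}
    (hy : ⟪cylLp A μ y, haarLp A μ θinv u y j'⟫_ℂ = 0) {x : List (Fin l)} (hxy : x ≠ y)
    (hlen : x.length ≤ y.length) (j : ℕ) :
    ⟪haarLp A μ θinv u x j, haarLp A μ θinv u y j'⟫_ℂ = 0 := by
  rw [haarLp_eq_sum_normCylLp, sum_inner]
  refine Finset.sum_eq_zero fun m _ => ?_
  rw [inner_smul_left, inner_normCylLp_haarLp_eq_zero hy ?_, mul_zero]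
  rcases prefix_or_disjoint_cylinder (A := A) hlen with hpre | hdisj
  · have hlt : x.length < y.length := lt_of_le_of_ne hlen fun h => hxy (hpre.eq_of_length h)
    exact subset_or_disjoint_cylinder (by simp [child]; omega)
  · exact Or.inr (hdisj.mono_left (cylinder_child_subset m))

theorem orthonormal_haarSet (hpos : ∀ x, Admissible A x → 0 < (μ (cylinder A x)).toReal)
    (hθ : ∀ (x : List (Fin l)) (hx : Admissible A x),
      Set.BijOn (θinv x) (Set.Iio (alpha A x)) {y : Fin l | A (x.getLast hx.1) y = 1})
    (hu : ∀ x, Admissible A x → HasOrthonormalColumns (alpha A x) (u x))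
    (hlast : ∀ x, Admissible A x → ∀ m < alpha A x,
      u x m (alpha A x - 1) =
        (Real.sqrt ((μ (cylinder A x)).toReal))⁻¹ *
          Real.sqrt ((μ (cylinder A (child θinv x m))).toReal)) :
    Orthonormal ℂ ((↑) : haarSet A μ θinv u → Lp ℂ 2 μ) := by
  classical
  have hsame x (hx : Admissible A x) {j j'} (hj : j < alpha A x) (hj' : j' < alpha A x) :=
    inner_haarLp_haarLp_same (μ := μ) (fun m hm => hpos _ (hx.child (hθ x hx).mapsTo hm))
      (hθ x hx).injOn (hu x hx) hj hj'
  have hmean : ∀ y j, Admissible A y → j + 1 < alpha A y →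
      ⟪cylLp A μ y, haarLp A μ θinv u y j⟫_ℂ = 0 := fun y j hy hj =>
    inner_cylLp_haarLp_self_eq_zero hy (hθ y hy) (hpos y hy)
      (fun m hm => hpos _ (hy.child (hθ y hy).mapsTo hm)) (hu y hy) (hlast y hy) hj
  have hcross : ∀ x y j j', Admissible A y → j' + 1 < alpha A y → x ≠ y →
      x.length ≤ y.length → ⟪haarLp A μ θinv u x j, haarLp A μ θinv u y j'⟫_ℂ = 0 :=
    fun x y j j' hy hj' hxy hlen =>
      inner_haarLp_haarLp_eq_zero_of_length_le (hmean y j' hy hj') hxy hlen j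
  have hsingle : ∀ a y j, Admissible A y → j + 1 < alpha A y →
      ⟪normCylLp A μ [a], haarLp A μ θinv u y j⟫_ℂ = 0 :=
    fun a y j hy hj => inner_normCylLp_haarLp_eq_zero (hmean y j hy hj)
      (subset_or_disjoint_cylinder (List.length_pos_iff.mpr hy.1))
  rw [orthonormal_subtype_iff_ite]
  intro f hf g hg
  split_ifs with hfg
  · subst hfg
    rcases hf with ⟨x, j, hx, hj, rfl⟩ | ⟨a, rfl⟩
    · rw [hsame x hx (by omega : j < _) (by omega : j < _), if_pos rfl]
    · exact inner_normCylLp_self (hpos _ (admissible_singleton a))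
  rcases hf with ⟨x, j, hx, hj, rfl⟩ | ⟨a, rfl⟩ <;>
    rcases hg with ⟨y, j', hy, hj', rfl⟩ | ⟨b, rfl⟩
  · obtain rfl | hxy := eq_or_ne x y
    · rw [hsame x hx (by omega) (by omega), if_neg (by rintro rfl; exact hfg rfl)]
    rcases le_total x.length y.length with hlen | hlen
    · exact hcross x y j j' hy hj' hxy hlen
    · exact inner_eq_zero_symm.mp (hcross y x j' j hx hj hxy.symm hlen)
  · exact inner_eq_zero_symm.mp (hsingle b x j hx hj)
  · exact hsingle a y j' hy hj'
  · exact inner_normCylLp_of_disjoint (disjoint_cylinder_singleton (by rintro rfl; exact hfg rfl))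

lemma normCylLp_child_mem_of_haarLp_mem {x : List (Fin l)} {K : Submodule ℂ (Lp ℂ 2 μ)}
    (hu : HasOrthonormalColumns (alpha A x) (u x))
    (hK : ∀ j < alpha A x, haarLp A μ θinv u x j ∈ K) {m : ℕ} (hm : m < alpha A x) :
    normCylLp A μ (child θinv x m) ∈ K := by
  rw [← hu.sum_smul_sum_smul (fun m => normCylLp A μ (child θinv x m)) hm]
  refine K.sum_mem fun j hj => K.smul_of_tower_mem _ ?_
  have hj := hK j (Finset.mem_range.mp hj)
  rw [haarLp_eq_sum_normCylLp] at hj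
  simp only [RCLike.real_smul_eq_coe_smul (K := ℂ)]
  exact hj

lemma haarLp_mem_span_haarSet {x : List (Fin l)} (hx : Admissible A x)
    (hθ : Set.BijOn (θinv x) (Set.Iio (alpha A x)) {y | A (x.getLast hx.1) y = 1})
    (hpos : ∀ m < alpha A x, 0 < (μ (cylinder A (child θinv x m))).toReal)
    (hlast : ∀ m < alpha A x, u x m (alpha A x - 1) =
      (Real.sqrt ((μ (cylinder A x)).toReal))⁻¹ *
        Real.sqrt ((μ (cylinder A (child θinv x m))).toReal))
    (hmem : normCylLp A μ x ∈ Submodule.span ℂ (haarSet A μ θinv u)) {j : ℕ}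
    (hj : j < alpha A x) :
    haarLp A μ θinv u x j ∈ Submodule.span ℂ (haarSet A μ θinv u) := by
  rcases Nat.lt_or_ge (j + 1) (alpha A x) with hj' | hj'
  · exact Submodule.subset_span (Or.inl ⟨x, j, hx, hj', rfl⟩)
  · rwa [show j = alpha A x - 1 by omega, haarLp_last hx.1 hθ hpos hlast]

lemma cylLp_mem_span_haarSet (hpos : ∀ x, Admissible A x → 0 < (μ (cylinder A x)).toReal)
    (hθ : ∀ (x : List (Fin l)) (hx : Admissible A x),
      Set.BijOn (θinv x) (Set.Iio (alpha A x)) {y : Fin l | A (x.getLast hx.1) y = 1})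
    (hu : ∀ x, Admissible A x → HasOrthonormalColumns (alpha A x) (u x))
    (hlast : ∀ x, Admissible A x → ∀ m < alpha A x,
      u x m (alpha A x - 1) =
        (Real.sqrt ((μ (cylinder A x)).toReal))⁻¹ *
          Real.sqrt ((μ (cylinder A (child θinv x m))).toReal))
    (x : List (Fin l)) : cylLp A μ x ∈ Submodule.span ℂ (haarSet A μ θinv u) := by
  have hsingle (a : Fin l) : cylLp A μ [a] ∈ Submodule.span ℂ (haarSet A μ θinv u) := by
    rw [cylLp_eq_smul_normCylLp (hpos _ (admissible_singleton a))]
    exact Submodule.smul_mem _ _ (Submodule.subset_span (Or.inr ⟨a, rfl⟩))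
  induction x using List.reverseRecOn with
  | nil =>
    rw [cylLp_nil_eq_sum]
    exact Submodule.sum_mem _ fun a _ => hsingle a
  | append_singleton y b ih =>
    by_cases hadm : Admissible A (y ++ [b])
    · obtain rfl | hy := eq_or_ne y []
      · exact hsingle b
      obtain ⟨hyadm, hb⟩ := hadm.of_append hy
      obtain ⟨m, hm, rfl⟩ := (hθ y hyadm).surjOn hb
      have hposc m (hm : m < alpha A y) := hpos _ (hyadm.child (hθ y hyadm).mapsTo hm)
      rw [cylLp_eq_smul_normCylLp (hpos _ hadm)]
      refine Submodule.smul_mem _ _ (normCylLp_child_mem_of_haarLp_mem (hu y hyadm) ?_ hm)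
      exact fun j hj => haarLp_mem_span_haarSet hyadm (hθ y hyadm) hposc (hlast y hyadm)
        (Submodule.smul_mem _ _ ih) hj
    · rw [cylLp_eq_zero_of_not_admissible (by simp) hadm]
      exact Submodule.zero_mem _

theorem topologicalClosure_span_haarSet
    (hpos : ∀ x, Admissible A x → 0 < (μ (cylinder A x)).toReal)
    (hθ : ∀ (x : List (Fin l)) (hx : Admissible A x),
      Set.BijOn (θinv x) (Set.Iio (alpha A x)) {y : Fin l | A (x.getLast hx.1) y = 1})
    (hu : ∀ x, Admissible A x → HasOrthonormalColumns (alpha A x) (u x))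
    (hlast : ∀ x, Admissible A x → ∀ m < alpha A x,
      u x m (alpha A x - 1) =
        (Real.sqrt ((μ (cylinder A x)).toReal))⁻¹ *
          Real.sqrt ((μ (cylinder A (child θinv x m))).toReal)) :
    (Submodule.span ℂ (haarSet A μ θinv u)).topologicalClosure = ⊤ :=
  Lp.topologicalClosure_eq_top_of_isPiSystem measurableSpace_eq_generateFrom_cylinder
    isPiSystem_range_cylinder ⟨[], cylinder_nil⟩
    (by rintro _ ⟨x, rfl⟩ -; exact cylLp_mem_span_haarSet hpos hθ hu hlast x)

end HaarFamily

theorem haar_orthonormal_basis_general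
    (A : Matrix (Fin l) (Fin l) ℕ) (hA : Primitive A)
    (φ : SigmaA l A → ℝ) (P : ℝ)
    (μ : Measure (SigmaA l A)) [IsProbabilityMeasure μ] (hGibbs : IsGibbs φ P μ)
    (θinv : List (Fin l) → ℕ → Fin l)
    (hθ : ∀ (x : List (Fin l)) (hx : Admissible A x),
      Set.BijOn (θinv x) (Set.Iio (alpha A x)) {y : Fin l | A (x.getLast hx.1) y = 1})
    (u : List (Fin l) → ℕ → ℕ → ℝ)
    (hu_orth : ∀ x, Admissible A x → ∀ j < alpha A x, ∀ j' < alpha A x,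
      ∑ m ∈ Finset.range (alpha A x), u x m j * u x m j' = if j = j' then 1 else 0)
    (hu_last : ∀ x, Admissible A x → ∀ m < alpha A x,
      u x m (alpha A x - 1) =
        (Real.sqrt ((μ (cylinder A x)).toReal))⁻¹ *
          Real.sqrt ((μ (cylinder A (child θinv x m))).toReal)) :
    Orthonormal ℂ ((↑) : haarSet A μ θinv u → Lp ℂ 2 μ) ∧
      (Submodule.span ℂ (haarSet A μ θinv u)).topologicalClosure = ⊤ := by
  have hpos : ∀ x, Admissible A x → 0 < (μ (cylinder A x)).toReal :=
    fun _ hx => hGibbs.measure_cylinder_pos hA.exists_transition hx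
  exact ⟨orthonormal_haarSet hpos hθ hu_orth hu_last,
    topologicalClosure_span_haarSet hpos hθ hu_orth hu_last⟩

/-- The Haar family `𝓗` is an orthonormal basis of `L²(Σ_A, B, μ; ℂ)`:
its elements are pairwise orthogonal unit vectors and its closed linear span is everything. -/
theorem haar_orthonormal_basis
    (hl : 2 ≤ l) (A : Matrix (Fin l) (Fin l) ℕ) (hA : Primitive A)
    (φ : SigmaA l A → ℝ) (hφ : HolderCont φ) (P : ℝ)
    (μ : Measure (SigmaA l A)) [IsProbabilityMeasure μ] (hGibbs : IsGibbs φ P μ)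
    (θinv : List (Fin l) → ℕ → Fin l)
    (hθ : ∀ (x : List (Fin l)) (hx : Admissible A x),
      Set.BijOn (θinv x) (Set.Iio (alpha A x)) {y : Fin l | A (x.getLast hx.1) y = 1})
    (u : List (Fin l) → ℕ → ℕ → ℝ)
    (hu_orth : ∀ x, Admissible A x → ∀ j < alpha A x, ∀ j' < alpha A x,
      ∑ m ∈ Finset.range (alpha A x), u x m j * u x m j' = if j = j' then 1 else 0)
    (hu_last : ∀ x, Admissible A x → ∀ m < alpha A x,
      u x m (alpha A x - 1) =
        (Real.sqrt ((μ (cylinder A x)).toReal))⁻¹ *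
          Real.sqrt ((μ (cylinder A (child θinv x m))).toReal)) :
    Orthonormal ℂ ((↑) : haarSet A μ θinv u → Lp ℂ 2 μ) ∧
      (Submodule.span ℂ (haarSet A μ θinv u)).topologicalClosure = ⊤ :=
  haar_orthonormal_basis_general A hA φ P μ hGibbs θinv hθ u hu_orth hu_last

end SFT
end

section
/- Let (x_k)_{k∈ℕ} be a monotonically increasing unbounded sequence of positive real numbers. Define d_1 := sup{ α ≥ 0 : limsup_{N→∞} (Σ_{k=1}^N x_k^{−α}) / ln N = ∞ }, d_2 := inf{ α ≥ 0 : limsup_{N→∞} (Σ_{k=1}^N x_k^{−α}) / ln N = 0 }, d_3 := inf{ α ≥ 0 : Σ_{k=1}^∞ x_k^{−α} < ∞ }, and d_4 := (liminf_{k→∞} ln(x_k)/ln(k))^{−1}, with the conventions 1/∞ := 0 and 1/0 := ∞. If any one of d_1, d_2, d_3, d_4 is positive and finite, then d_1 = d_2 = d_3 = d_4. -/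
/-!
Write `e = liminf log x_k / log k`, so `d₄ = e⁻¹`; each of `d₁, d₂, d₃` is the
threshold `e⁻¹`. If `α > e⁻¹`, pick `p < e` with `p α > 1`: eventually `x_k > k^p`, so
`∑ x_k^{-α}` is dominated by `∑ k^{-pα} < ∞`, and a convergent series divided by `log N`
tends to `0`. If `α < e⁻¹`, pick `p > e` with `p α < 1`: for infinitely many `k`,
monotonicity gives `x_j ≤ x_k < k^p` for all `j ≤ k`, so the `(k+1)`-st partial sum is at
least `(k+1)^{1-pα}`, which outgrows `log (k+1)`.
-/

open Filter
open scoped ENNReal NNReal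

/-- `d₁ := sup{α ≥ 0 : limsup_N (∑_{k≤N} x_k^{−α})/ln N = ∞}` (in `[0,∞]`, `sup ∅ = 0`). -/
noncomputable def d1 (x : ℕ → ℝ) : ℝ≥0∞ :=
  sSup ((fun α : ℝ≥0 => (α : ℝ≥0∞)) ''
    {α : ℝ≥0 | Filter.limsup
      (fun N : ℕ => ENNReal.ofReal ((∑ k ∈ Finset.range N, x k ^ (-(α : ℝ))) / Real.log N))
      atTop = ⊤})

/-- `d₂ := inf{α ≥ 0 : limsup_N (∑_{k≤N} x_k^{−α})/ln N = 0}` (in `[0,∞]`, `inf ∅ = ∞`). -/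
noncomputable def d2 (x : ℕ → ℝ) : ℝ≥0∞ :=
  sInf ((fun α : ℝ≥0 => (α : ℝ≥0∞)) ''
    {α : ℝ≥0 | Filter.limsup
      (fun N : ℕ => ENNReal.ofReal ((∑ k ∈ Finset.range N, x k ^ (-(α : ℝ))) / Real.log N))
      atTop = 0})

/-- `d₃ := inf{α ≥ 0 : ∑_k x_k^{−α} < ∞}` (in `[0,∞]`, `inf ∅ = ∞`). -/
noncomputable def d3 (x : ℕ → ℝ) : ℝ≥0∞ :=
  sInf ((fun α : ℝ≥0 => (α : ℝ≥0∞)) ''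
    {α : ℝ≥0 | Summable fun k : ℕ => x k ^ (-(α : ℝ))})

/-- `d₄ := (liminf_k ln(x_k)/ln(k))⁻¹` in `[0,∞]`, with `1/∞ = 0` and `1/0 = ∞`. -/
noncomputable def d4 (x : ℕ → ℝ) : ℝ≥0∞ :=
  (Filter.liminf (fun k : ℕ => ENNReal.ofReal (Real.log (x k) / Real.log k)) atTop)⁻¹

open Finset Real Topology

section ThresholdExponent

variable {a : ℝ≥0∞} {P : ℝ≥0 → Prop}

theorem sSup_coe_image_setOf_eq (hlt : ∀ α : ℝ≥0, (α : ℝ≥0∞) < a → P α)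
    (hgt : ∀ α : ℝ≥0, a < α → ¬ P α) :
    sSup ((fun α : ℝ≥0 => (α : ℝ≥0∞)) '' {α | P α}) = a := by
  refine le_antisymm (sSup_le ?_)
    (ENNReal.le_of_forall_nnreal_lt fun r hr => le_sSup ⟨r, hlt r hr, rfl⟩)
  rintro _ ⟨α, hα, rfl⟩
  exact not_lt.1 fun h => hgt α h hα

theorem sInf_coe_image_setOf_eq (hgt : ∀ α : ℝ≥0, a < α → P α)
    (hlt : ∀ α : ℝ≥0, (α : ℝ≥0∞) < a → ¬ P α) :
    sInf ((fun α : ℝ≥0 => (α : ℝ≥0∞)) '' {α | P α}) = a := by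
  refine le_antisymm (le_of_not_gt fun h => ?_) (le_sInf ?_)
  · obtain ⟨r, har, hr⟩ := ENNReal.lt_iff_exists_nnreal_btwn.1 h
    exact (sInf_le (Set.mem_image_of_mem _ (hgt r har))).not_gt hr
  · rintro _ ⟨α, hα, rfl⟩
    exact not_lt.1 fun h => hlt α h hα

end ThresholdExponent

theorem tendsto_natCast_rpow_div_log_atTop {δ : ℝ} (hδ : 0 < δ) :
    Tendsto (fun N : ℕ => (N : ℝ) ^ δ / log N) atTop atTop := by
  have h : Tendsto (fun y : ℝ => y ^ δ / log y) atTop atTop := by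
    refine ((tendsto_exp_mul_div_rpow_atTop 1 δ hδ).comp tendsto_log_atTop).congr' ?_
    filter_upwards [eventually_gt_atTop 0] with y hy
    simp [rpow_def_of_pos hy, mul_comm]
  exact h.comp tendsto_natCast_atTop_atTop

theorem limsup_ofReal_eq_top_of_frequently_le {ι : Type*} {l : Filter ι} {f g : ι → ℝ}
    (hg : Tendsto g l atTop) (hfg : ∃ᶠ i in l, g i ≤ f i) :
    limsup (fun i => ENNReal.ofReal (f i)) l = ⊤ := by
  refine eq_top_iff.2 (ENNReal.le_of_forall_nnreal_lt fun r _ => le_limsup_of_frequently_le ?_)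
  refine (hfg.and_eventually (hg.eventually_ge_atTop r)).mono fun i hi => ?_
  rw [← ENNReal.ofReal_coe_nnreal]
  exact ENNReal.ofReal_le_ofReal (hi.2.trans hi.1)

theorem limsup_ofReal_sum_range_div_log_eq_zero {f : ℕ → ℝ} (hf : ∀ k, 0 ≤ f k)
    (hs : Summable f) :
    limsup (fun N : ℕ => ENNReal.ofReal ((∑ k ∈ range N, f k) / log N)) atTop = 0 := by
  have hlog : Tendsto (fun N : ℕ => log N) atTop atTop :=
    tendsto_log_atTop.comp tendsto_natCast_atTop_atTop
  have hbound : Tendsto (fun N : ℕ => ENNReal.ofReal ((∑' k, f k) / log N)) atTop (𝓝 0) := by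
    simpa using ENNReal.tendsto_ofReal (tendsto_const_nhds.div_atTop hlog)
  refine (tendsto_of_tendsto_of_tendsto_of_le_of_le' tendsto_const_nhds hbound
    (Eventually.of_forall fun _ => zero_le) ?_).limsup_eq
  filter_upwards [hlog.eventually_ge_atTop 0] with N hN
  exact ENNReal.ofReal_le_ofReal
    (div_le_div_of_nonneg_right (hs.sum_le_tsum _ fun k _ => hf k) hN)

theorem succ_mul_rpow_neg_le_sum_range {x : ℕ → ℝ} (hpos : ∀ k, 0 < x k)
    (hmono : Monotone x)    {α : ℝ} (hα : 0 ≤ α) {k : ℕ} {y : ℝ} (hy : x k ≤ y) :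
    ((k : ℝ) + 1) * y ^ (-α) ≤ ∑ j ∈ range (k + 1), x j ^ (-α) := by
  have := card_nsmul_le_sum (range (k + 1)) (fun j => x j ^ (-α)) (y ^ (-α)) fun j hj =>
    rpow_le_rpow_of_nonpos (hpos j) ((hmono (mem_range_succ_iff.1 hj)).trans hy)
      (neg_nonpos.2 hα)
  simpa [nsmul_eq_mul] using this

section CriticalExponents

variable {x : ℕ → ℝ}

theorem eventually_rpow_lt_of_lt_inv_d4 (hpos : ∀ k, 0 < x k) {p : ℝ≥0}
    (hp : (p : ℝ≥0∞) < (d4 x)⁻¹) :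
    ∀ᶠ k : ℕ in atTop, (k : ℝ) ^ (p : ℝ) < x k := by
  rw [d4, inv_inv] at hp
  filter_upwards [eventually_lt_of_lt_liminf hp, eventually_gt_atTop 1] with k hk hk1
  have hk0 : (0 : ℝ) < k := by positivity
  have hlogk : 0 < log k := log_pos (by exact_mod_cast hk1)
  rw [← ENNReal.ofReal_coe_nnreal, ENNReal.ofReal_lt_ofReal_iff', lt_div_iff₀ hlogk] at hk
  rw [← log_lt_log_iff (by positivity) (hpos k), log_rpow hk0]
  exact hk.1

theorem frequently_lt_rpow_of_inv_d4_lt (hpos : ∀ k, 0 < x k) {p : ℝ≥0}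
    (hp : (d4 x)⁻¹ < p) : ∃ᶠ k : ℕ in atTop, x k < (k : ℝ) ^ (p : ℝ) := by
  rw [d4, inv_inv] at hp
  refine ((frequently_lt_of_liminf_lt (by isBoundedDefault) hp).and_eventually
    (eventually_gt_atTop 1)).mono fun k ⟨hk, hk1⟩ => ?_
  have hk0 : (0 : ℝ) < k := by positivity
  have hlogk : 0 < log k := log_pos (by exact_mod_cast hk1)
  rw [← ENNReal.ofReal_coe_nnreal, ENNReal.ofReal_lt_ofReal_iff', div_lt_iff₀ hlogk] at hk
  rw [← log_lt_log_iff (hpos k) (by positivity), log_rpow hk0]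
  exact hk.1

theorem summable_rpow_neg_of_d4_lt (hpos : ∀ k, 0 < x k) {α : ℝ≥0} (hα : d4 x < α) :
    Summable fun k => x k ^ (-(α : ℝ)) := by
  obtain ⟨p, hαp, hp⟩ := ENNReal.lt_iff_exists_nnreal_btwn.1 (ENNReal.inv_lt_inv.2 hα)
  have hpα : (1 : ℝ≥0∞) < p * α :=
    (ENNReal.div_lt_iff (Or.inr one_ne_zero) (Or.inr ENNReal.one_ne_top)).1 (by rwa [one_div])
  have hpα' : (1 : ℝ) < p * α := by exact_mod_cast hpα
  refine Summable.of_norm_bounded_eventually_nat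
    (g := fun k : ℕ => (k : ℝ) ^ (-((p : ℝ) * α)))
    (summable_nat_rpow.2 (by linarith)) ?_
  filter_upwards [eventually_rpow_lt_of_lt_inv_d4 hpos hp, eventually_gt_atTop 0] with k hk hk0
  rw [norm_of_nonneg (rpow_nonneg (hpos k).le _), ← mul_neg, rpow_mul (Nat.cast_nonneg k)]
  exact rpow_le_rpow_of_nonpos (rpow_pos_of_pos (Nat.cast_pos.2 hk0) _) hk.le
    (neg_nonpos.2 α.coe_nonneg)

theorem limsup_sum_range_div_log_eq_top_of_lt_d4 (hpos : ∀ k, 0 < x k) (hmono : Monotone x)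
    {α : ℝ≥0} (hα : (α : ℝ≥0∞) < d4 x) :
    limsup (fun N : ℕ => ENNReal.ofReal ((∑ k ∈ range N, x k ^ (-(α : ℝ))) / log N)) atTop
      = ⊤ := by
  obtain ⟨p, hp, hpα⟩ := ENNReal.lt_iff_exists_nnreal_btwn.1 (ENNReal.inv_lt_inv.2 hα)
  have hpα' : (p : ℝ) * α < 1 := by
    have := ENNReal.mul_lt_of_lt_div (a := p) (b := 1) (c := α) (by rwa [one_div])
    exact_mod_cast this
  have hsum :
      ∃ᶠ N : ℕ in atTop, (N : ℝ) ^ (1 - (p : ℝ) * α) ≤ ∑ k ∈ range N, x k ^ (-(α : ℝ)) := by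
    refine (tendsto_add_atTop_nat 1).frequently
      ((frequently_lt_rpow_of_inv_d4_lt hpos hp).mono fun k hk => ?_)
    have hy : x k ≤ ((k : ℝ) + 1) ^ (p : ℝ) :=
      hk.le.trans (rpow_le_rpow (Nat.cast_nonneg _) (by linarith) p.coe_nonneg)
    calc (((k + 1 : ℕ) : ℝ)) ^ (1 - (p : ℝ) * α)
        = ((k : ℝ) + 1) * (((k : ℝ) + 1) ^ (p : ℝ)) ^ (-(α : ℝ)) := by
          rw [← rpow_mul (by positivity), sub_eq_add_neg, rpow_add (by positivity), rpow_one,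
            mul_neg]
          push_cast
          rfl
      _ ≤ _ := succ_mul_rpow_neg_le_sum_range hpos hmono α.coe_nonneg hy
  refine limsup_ofReal_eq_top_of_frequently_le (tendsto_natCast_rpow_div_log_atTop
    (sub_pos.2 hpα')) (hsum.and_eventually (eventually_gt_atTop 1) |>.mono fun N hN => ?_)
  exact div_le_div_of_nonneg_right hN.1 (log_nonneg (by exact_mod_cast hN.2.le))

theorem limsup_sum_range_div_log_eq_zero_of_d4_lt (hpos : ∀ k, 0 < x k) {α : ℝ≥0}
    (hα : d4 x < α) :
    limsup (fun N : ℕ => ENNReal.ofReal ((∑ k ∈ range N, x k ^ (-(α : ℝ))) / log N)) atTop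
      = 0 :=
  limsup_ofReal_sum_range_div_log_eq_zero (fun k => (rpow_pos_of_pos (hpos k) _).le)
    (summable_rpow_neg_of_d4_lt hpos hα)

theorem d1_eq_d4 (hpos : ∀ k, 0 < x k) (hmono : Monotone x) : d1 x = d4 x :=
  sSup_coe_image_setOf_eq (fun _ hα => limsup_sum_range_div_log_eq_top_of_lt_d4 hpos hmono hα)
    fun _ hα htop =>
      ENNReal.zero_ne_top ((limsup_sum_range_div_log_eq_zero_of_d4_lt hpos hα).symm.trans htop)

theorem d2_eq_d4 (hpos : ∀ k, 0 < x k) (hmono : Monotone x) : d2 x = d4 x :=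
  sInf_coe_image_setOf_eq (fun _ hα => limsup_sum_range_div_log_eq_zero_of_d4_lt hpos hα)
    fun _ hα hzero =>
      ENNReal.top_ne_zero
        ((limsup_sum_range_div_log_eq_top_of_lt_d4 hpos hmono hα).symm.trans hzero)

theorem d3_eq_d4 (hpos : ∀ k, 0 < x k) (hmono : Monotone x) : d3 x = d4 x :=
  sInf_coe_image_setOf_eq (fun _ hα => summable_rpow_neg_of_d4_lt hpos hα)
    fun _ hα hs => ENNReal.top_ne_zero <|
      (limsup_sum_range_div_log_eq_top_of_lt_d4 hpos hmono hα).symm.trans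
        (limsup_ofReal_sum_range_div_log_eq_zero (fun k => (rpow_pos_of_pos (hpos k) _).le) hs)

end CriticalExponents

theorem critical_exponents_eq_general (x : ℕ → ℝ) (hpos : ∀ k, 0 < x k) (hmono : Monotone x) :
    d1 x = d2 x ∧ d2 x = d3 x ∧ d3 x = d4 x := by
  rw [d1_eq_d4 hpos hmono, d2_eq_d4 hpos hmono, d3_eq_d4 hpos hmono]
  exact ⟨rfl, rfl, rfl⟩

/-- For a monotonically increasing unbounded sequence of positive reals,
if any of `d₁, d₂, d₃, d₄` is positive and finite then they are all equal. -/
theorem critical_exponents_eq (x : ℕ → ℝ) (hpos : ∀ k, 0 < x k) (hmono : Monotone x)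
    (hunb : ¬ BddAbove (Set.range x))
    (hfin : (0 < d1 x ∧ d1 x < ⊤) ∨ (0 < d2 x ∧ d2 x < ⊤) ∨ (0 < d3 x ∧ d3 x < ⊤) ∨
      (0 < d4 x ∧ d4 x < ⊤)) :
    d1 x = d2 x ∧ d2 x = d3 x ∧ d3 x = d4 x :=
  critical_exponents_eq_general x hpos hmono
end
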